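/- arXiv:2101.01066 — 2 statements merged into one kernel-verified Lean document; each statement's English description precedes it below -/
import Mathlib

section
/- Let φ, φ̃ : M → N be two smooth maps expressed in the same local charts, with corresponding local variables u₀ and ũ₀ (the components of their tension fields). Then on any open set D whose closure is compact and contained in the chart domain, there exists a constant C > 0 such that |Δ(φ − φ̃)| ≤ C( |φ − φ̃| + |dφ − dφ̃| + |u₀ − ũ₀| ), where φ, φ̃ denote the vector-valued local representations of the maps and Δ acts componentwise. -/
noncomputable section

open scoped BigOperators

namespace Polyharm

/-- Partial derivative of a scalar function on `ℝ^d` in the `i`-th coordinate direction. -/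
def pd {d : ℕ} (i : Fin d) (f : (Fin d → ℝ) → ℝ) (x : Fin d → ℝ) : ℝ :=
  fderiv ℝ f x (Pi.single i 1)

/-- Euclidean norm of a finite family of real numbers. -/
def vnorm {ι : Type} [Fintype ι] (f : ι → ℝ) : ℝ :=
  Real.sqrt (∑ i, f i ^ 2)

/-- Local-coordinate data for maps between Riemannian manifolds: the inverse metric
`g^{ij}` and the Christoffel symbols `Γ^k_{ij}` of a chart of the domain `(M,g)`, and
the Christoffel symbols `Γ^α_{βγ}` of a chart of the target `(N,h)`. -/
structure ChartData (m n : ℕ) where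
  ginv : (Fin m → ℝ) → Fin m → Fin m → ℝ
  ΓM : (Fin m → ℝ) → Fin m → Fin m → Fin m → ℝ
  ΓN : (Fin n → ℝ) → Fin n → Fin n → Fin n → ℝ

variable {m n : ℕ}

/-- Smoothness of the domain data. -/
def ChartData.SmoothDomain (P : ChartData m n) : Prop :=
  (∀ i j, ContDiff ℝ (⊤ : ℕ∞) fun x => P.ginv x i j) ∧
  (∀ k i j, ContDiff ℝ (⊤ : ℕ∞) fun x => P.ΓM x k i j)

/-- Smoothness of the target Christoffel symbols. -/
def ChartData.SmoothTarget (P : ChartData m n) : Prop :=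
  ∀ α β γ, ContDiff ℝ (⊤ : ℕ∞) fun y => P.ΓN y α β γ

/-- The chart data comes from Riemannian metrics: `g^{ij}` is symmetric and positive
definite, and the Christoffel symbols are symmetric in their lower indices. -/
def ChartData.Riemannian (P : ChartData m n) : Prop :=
  (∀ x i j, P.ginv x i j = P.ginv x j i) ∧
  (∀ x (v : Fin m → ℝ), v ≠ 0 → 0 < ∑ i, ∑ j, P.ginv x i j * v i * v j) ∧
  (∀ x k i j, P.ΓM x k i j = P.ΓM x k j i) ∧
  (∀ y α β γ, P.ΓN y α β γ = P.ΓN y α γ β)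

/-- The Laplace–Beltrami operator on scalar functions:
`-Δ f = g^{ij} ∂²f/∂x^i∂x^j - g^{ij} Γ^k_{ij} ∂f/∂x^k`. -/
def lap (P : ChartData m n) (f : (Fin m → ℝ) → ℝ) (x : Fin m → ℝ) : ℝ :=
  -((∑ i, ∑ j, P.ginv x i j * pd i (fun z => pd j f z) x)
    - ∑ i, ∑ j, ∑ k, P.ginv x i j * P.ΓM x k i j * pd k f x)

/-- `φ_i^β = ∂φ^β/∂x^i`. -/
def dphi (φ : (Fin m → ℝ) → Fin n → ℝ) (x : Fin m → ℝ) (i : Fin m) (β : Fin n) : ℝ :=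
  pd i (fun z => φ z β) x

/-- `⟨dφ^β, dψ^γ⟩ = g^{ij} φ_i^β ψ_j^γ`. -/
def dpair (P : ChartData m n) (φ ψ : (Fin m → ℝ) → Fin n → ℝ) (x : Fin m → ℝ)
    (β γ : Fin n) : ℝ :=
  ∑ i, ∑ j, P.ginv x i j * dphi φ x i β * dphi ψ x j γ

/-- Components `R^α_{δβγ}` of the curvature tensor of the target, with the sign
convention `R(∂/∂y^β, ∂/∂y^γ)∂/∂y^δ = R^α_{δβγ} ∂/∂y^α` of the paper. -/
def Rc (P : ChartData m n) (y : Fin n → ℝ) (α δ β γ : Fin n) : ℝ :=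
  pd β (fun z => P.ΓN z α γ δ) y - pd γ (fun z => P.ΓN z α β δ) y
    + ∑ μ, (P.ΓN y α β μ * P.ΓN y μ γ δ - P.ΓN y α γ μ * P.ΓN y μ β δ)

/-- `2S^α_{βωϑ} = ∂Γ^α_{βϑ}/∂y^ω + Γ^γ_{βϑ}Γ^α_{ωγ} + ∂Γ^α_{ωϑ}/∂y^β + Γ^γ_{ωϑ}Γ^α_{βγ}`. -/
def Scoef (P : ChartData m n) (y : Fin n → ℝ) (α β ω ϑ : Fin n) : ℝ :=
  (pd ω (fun z => P.ΓN z α β ϑ) y + (∑ γ, P.ΓN y γ β ϑ * P.ΓN y α ω γ)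
    + pd β (fun z => P.ΓN z α ω ϑ) y + ∑ γ, P.ΓN y γ ω ϑ * P.ΓN y α β γ) / 2

/-- The operator
`A^α(η,ξ) = ξ_i^ϑ(-2 g^{ij} φ_j^β Γ^α_{βϑ}) + η^ϑ((Δφ^β)Γ^α_{βϑ} - g^{ij} φ_j^β φ_i^ω S^α_{βωϑ})`. -/
def Aop (P : ChartData m n) (φ : (Fin m → ℝ) → Fin n → ℝ) (η : Fin n → ℝ)
    (ξ : Fin m → Fin n → ℝ) (x : Fin m → ℝ) (α : Fin n) : ℝ :=
  (∑ ϑ, ∑ i, ξ i ϑ * (-2 * ∑ j, ∑ β, P.ginv x i j * dphi φ x j β * P.ΓN (φ x) α β ϑ))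
    + ∑ ϑ, η ϑ * ((∑ β, lap P (fun z => φ z β) x * P.ΓN (φ x) α β ϑ)
        - ∑ i, ∑ j, ∑ β, ∑ ω,
            P.ginv x i j * dphi φ x j β * dphi φ x i ω * Scoef P (φ x) α β ω ϑ)

/-- The operator `A` applied to (the components of) a section `σ` of `φ⁻¹TN`:
`A(σ, ∂σ)`. -/
def Asec (P : ChartData m n) (φ σ : (Fin m → ℝ) → Fin n → ℝ) (x : Fin m → ℝ)
    (α : Fin n) : ℝ :=
  Aop P φ (σ x) (fun i ϑ => pd i (fun z => σ z ϑ) x) x α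

/-- Components of the tension field `τ^α(φ) = -Δφ^α + g^{ij} Γ^α_{ϑβ} φ_i^ϑ φ_j^β`. -/
def tension (P : ChartData m n) (φ : (Fin m → ℝ) → Fin n → ℝ) (x : Fin m → ℝ)
    (α : Fin n) : ℝ :=
  -(lap P (fun z => φ z α) x)
    + ∑ i, ∑ j, ∑ ϑ, ∑ β,
        P.ginv x i j * P.ΓN (φ x) α ϑ β * dphi φ x i ϑ * dphi φ x j β

/-- The components `u_j` of `Δ̄^j τ(φ)`: `u_0 = τ(φ)` and
`u_{j+1} = Δ u_j + A(u_j, ∂u_j)` (local expression of the rough Laplacian). -/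
def uvar (P : ChartData m n) (φ : (Fin m → ℝ) → Fin n → ℝ) :
    ℕ → (Fin m → ℝ) → Fin n → ℝ
  | 0 => tension P φ
  | j+1 => fun x α => lap P (fun z => uvar P φ j z α) x + Asec P φ (uvar P φ j) x α

/-- `v_j = du_j`, i.e. `v_{j i}^α = ∂u_j^α/∂x^i`. -/
def vvar (P : ChartData m n) (φ : (Fin m → ℝ) → Fin n → ℝ) (j : ℕ) (x : Fin m → ℝ)
    (i : Fin m) (α : Fin n) : ℝ :=
  pd i (fun z => uvar P φ j z α) x

/-- Components of the pull-back covariant derivative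
`(∇̄_{∂_i} σ)^γ = ∂σ^γ/∂x^i + Γ^γ_{βδ}(φ) φ_i^β σ^δ`. -/
def covD (P : ChartData m n) (φ σ : (Fin m → ℝ) → Fin n → ℝ) (i : Fin m)
    (x : Fin m → ℝ) (γ : Fin n) : ℝ :=
  pd i (fun z => σ z γ) x + ∑ β, ∑ δ, P.ΓN (φ x) γ β δ * dphi φ x i β * σ x δ

/-- `(Tr_g R^N(X, dφ(·))dφ(·))^α`. -/
def trRphi (P : ChartData m n) (φ X : (Fin m → ℝ) → Fin n → ℝ) (x : Fin m → ℝ)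
    (α : Fin n) : ℝ :=
  ∑ i, ∑ j, ∑ β, ∑ γ, ∑ δ,
    P.ginv x i j * Rc P (φ x) α δ β γ * X x β * dphi φ x i γ * dphi φ x j δ

/-- `(Tr_g R^N(dφ(·), X)dφ(·))^α`. -/
def trRphi2 (P : ChartData m n) (φ X : (Fin m → ℝ) → Fin n → ℝ) (x : Fin m → ℝ)
    (α : Fin n) : ℝ :=
  ∑ i, ∑ j, ∑ β, ∑ γ, ∑ δ,
    P.ginv x i j * Rc P (φ x) α δ β γ * dphi φ x i β * X x γ * dphi φ x j δ

/-- `(Tr_g R^N(∇̄_{(·)}W, Z)dφ(·))^α`. -/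
def trRD (P : ChartData m n) (φ W Z : (Fin m → ℝ) → Fin n → ℝ) (x : Fin m → ℝ)
    (α : Fin n) : ℝ :=
  ∑ i, ∑ j, ∑ β, ∑ γ, ∑ δ,
    P.ginv x i j * Rc P (φ x) α δ β γ * covD P φ W i x β * Z x γ * dphi φ x j δ

/-- `(Tr_g R^N(W, ∇̄_{(·)}Z)dφ(·))^α`. -/
def trRD2 (P : ChartData m n) (φ W Z : (Fin m → ℝ) → Fin n → ℝ) (x : Fin m → ℝ)
    (α : Fin n) : ℝ :=
  ∑ i, ∑ j, ∑ β, ∑ γ, ∑ δ,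
    P.ginv x i j * Rc P (φ x) α δ β γ * W x β * covD P φ Z i x γ * dphi φ x j δ

/-- Local components of Maeta's `k`-tension field `τ_k(φ)`, for `k = 2s`:
`τ_{2s}(φ) = Δ̄^{2s-1}τ(φ) - R^N(Δ̄^{2s-2}τ(φ), dφ(e_j))dφ(e_j)
  - Σ_{ℓ=1}^{s-1}( R^N(∇̄_{e_j}Δ̄^{s+ℓ-2}τ(φ), Δ̄^{s-ℓ-1}τ(φ))dφ(e_j)
                 - R^N(Δ̄^{s+ℓ-2}τ(φ), ∇̄_{e_j}Δ̄^{s-ℓ-1}τ(φ))dφ(e_j) )`,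
and for `k = 2s+1`:
`τ_{2s+1}(φ) = Δ̄^{2s}τ(φ) - R^N(Δ̄^{2s-1}τ(φ), dφ(e_j))dφ(e_j)
  - Σ_{ℓ=1}^{s-1}( R^N(∇̄_{e_j}Δ̄^{s+ℓ-1}τ(φ), Δ̄^{s-ℓ-1}τ(φ))dφ(e_j)
                 - R^N(Δ̄^{s+ℓ-1}τ(φ), ∇̄_{e_j}Δ̄^{s-ℓ-1}τ(φ))dφ(e_j) )
  - R^N(∇̄_{e_j}Δ̄^{s-1}τ(φ), Δ̄^{s-1}τ(φ))dφ(e_j)`. -/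
def tauK (P : ChartData m n) (φ : (Fin m → ℝ) → Fin n → ℝ) (k : ℕ) (x : Fin m → ℝ)
    (α : Fin n) : ℝ :=
  if Even k then
    uvar P φ (k-1) x α - trRphi P φ (uvar P φ (k-2)) x α
      - ∑ ℓ ∈ Finset.Icc 1 (k/2 - 1),
          (trRD P φ (uvar P φ (k/2 + ℓ - 2)) (uvar P φ (k/2 - ℓ - 1)) x α
            - trRD2 P φ (uvar P φ (k/2 + ℓ - 2)) (uvar P φ (k/2 - ℓ - 1)) x α)
  else
    uvar P φ (k-1) x α - trRphi P φ (uvar P φ (k-2)) x α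
      - (∑ ℓ ∈ Finset.Icc 1 (k/2 - 1),
          (trRD P φ (uvar P φ (k/2 + ℓ - 1)) (uvar P φ (k/2 - ℓ - 1)) x α
            - trRD2 P φ (uvar P φ (k/2 + ℓ - 1)) (uvar P φ (k/2 - ℓ - 1)) x α))
      - trRD P φ (uvar P φ (k/2 - 1)) (uvar P φ (k/2 - 1)) x α

/-- Components `(∇dφ)(∂_i,∂_j)^α` of the second fundamental form of `φ`. -/
def sff (P : ChartData m n) (φ : (Fin m → ℝ) → Fin n → ℝ) (x : Fin m → ℝ)
    (i j : Fin m) (α : Fin n) : ℝ :=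
  pd i (fun z => dphi φ z j α) x - (∑ k, P.ΓM x k i j * dphi φ x k α)
    + ∑ β, ∑ γ, P.ΓN (φ x) α β γ * dphi φ x i β * dphi φ x j γ

/-! By the definition of the tension field, `Δφ^α = g^{ij}(x) Γ^α_{ϑβ}(φ) φ_i^ϑ φ_j^β - u₀^α`,
and the first term is a smooth function `Q` of the jet `(x, φ(x), dφ(x))`. The jets of `φ` and
`φ̃` over the compact set `closure D` stay in a compact set, on which the `C¹` map `Q` is
Lipschitz; hence `|Q(jet φ) - Q(jet φ̃)| ≤ L (|φ - φ̃| + |dφ - dφ̃|)` on `D`, and the triangle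
inequality gives the estimate with `C = L + 1`. -/

theorem _root_.ContDiff.exists_norm_comp_sub_comp_le {X E F : Type*} [TopologicalSpace X]
    [NormedAddCommGroup E] [NormedSpace ℝ E] [FiniteDimensional ℝ E]
    [NormedAddCommGroup F] [NormedSpace ℝ F] {G : E → F} (hG : ContDiff ℝ 1 G)
    {K : Set X} (hK : IsCompact K) {f g : X → E} (hf : Continuous f) (hg : Continuous g) :
    ∃ L : NNReal, ∀ x ∈ K, ‖G (f x) - G (g x)‖ ≤ L * ‖f x - g x‖ := by
  obtain ⟨L, hL⟩ := hG.locallyLipschitz.locallyLipschitzOn.exists_lipschitzOnWith_of_compact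
    ((hK.image hf).union (hK.image hg))
  exact ⟨L, fun x hx => hL.norm_sub_le (Or.inl ⟨x, hx, rfl⟩) (Or.inr ⟨x, hx, rfl⟩)⟩

lemma vnorm_eq_norm {ι : Type} [Fintype ι] (f : ι → ℝ) :
    vnorm f = ‖(WithLp.toLp 2 f : EuclideanSpace ℝ ι)‖ := by
  simp [vnorm, EuclideanSpace.norm_eq]

lemma vnorm_nonneg {ι : Type} [Fintype ι] (f : ι → ℝ) : 0 ≤ vnorm f :=
  Real.sqrt_nonneg _

lemma contDiff_pd {d : ℕ} {k : WithTop ℕ∞} {f : (Fin d → ℝ) → ℝ} (hf : ContDiff ℝ (k + 1) f)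
    (i : Fin d) : ContDiff ℝ k (pd i f) :=
  (hf.fderiv_right le_rfl).clm_apply contDiff_const

lemma pd_sub {d : ℕ} {f g : (Fin d → ℝ) → ℝ} {x : Fin d → ℝ} (hf : DifferentiableAt ℝ f x)
    (hg : DifferentiableAt ℝ g x) (i : Fin d) :
    pd i (fun z => f z - g z) x = pd i f x - pd i g x := by
  simp only [pd, fderiv_fun_sub hf hg, sub_apply]

lemma lap_sub (P : ChartData m n) {f g : (Fin m → ℝ) → ℝ}
    (hf : ContDiff ℝ 2 f) (hg : ContDiff ℝ 2 g) (x : Fin m → ℝ) :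
    lap P (fun z => f z - g z) x = lap P f x - lap P g x := by
  have hpd : ∀ j, pd j (fun z => f z - g z) = fun z => pd j f z - pd j g z := fun j =>
    funext fun z => pd_sub (hf.differentiable two_ne_zero z) (hg.differentiable two_ne_zero z) j
  have hpd2 : ∀ i j, pd i (fun z => pd j f z - pd j g z) x
      = pd i (fun z => pd j f z) x - pd i (fun z => pd j g z) x := fun i j =>
    pd_sub ((contDiff_pd (k := 1) hf j).differentiable one_ne_zero x)
      ((contDiff_pd (k := 1) hg j).differentiable one_ne_zero x) i
  simp only [lap, hpd, hpd2, mul_sub, Finset.sum_sub_distrib]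
  ring

abbrev Jet (m n : ℕ) : Type :=
  (Fin m → ℝ) × EuclideanSpace ℝ (Fin n) × EuclideanSpace ℝ (Fin m × Fin n)

def jet (φ : (Fin m → ℝ) → Fin n → ℝ) (x : Fin m → ℝ) : Jet m n :=
  (x, WithLp.toLp 2 (φ x), WithLp.toLp 2 fun p => dphi φ x p.1 p.2)

def christoffelQuad (P : ChartData m n) (a : Jet m n) : EuclideanSpace ℝ (Fin n) :=
  WithLp.toLp 2 fun α => ∑ i, ∑ j, ∑ ϑ, ∑ β,
    P.ginv a.1 i j * P.ΓN a.2.1.ofLp α ϑ β * a.2.2 (i, ϑ) * a.2.2 (j, β)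

lemma lap_eq_christoffelQuad_sub_uvar (P : ChartData m n) (φ : (Fin m → ℝ) → Fin n → ℝ)
    (x : Fin m → ℝ) (α : Fin n) :
    lap P (fun z => φ z α) x = christoffelQuad P (jet φ x) α - uvar P φ 0 x α := by
  simp only [christoffelQuad, jet, uvar, tension]
  ring

lemma contDiff_christoffelQuad (P : ChartData m n) {k : WithTop ℕ∞}
    (hg : ∀ i j, ContDiff ℝ k fun x => P.ginv x i j)
    (hΓ : ∀ α β γ, ContDiff ℝ k fun y => P.ΓN y α β γ) :
    ContDiff ℝ k (christoffelQuad P) := by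
  have hx : ∀ i j, ContDiff ℝ k fun a : Jet m n => P.ginv a.1 i j := fun i j =>
    (hg i j).comp contDiff_fst
  have hy : ∀ α ϑ β, ContDiff ℝ k fun a : Jet m n => P.ΓN a.2.1.ofLp α ϑ β := fun α ϑ β =>
    (hΓ α ϑ β).comp (PiLp.contDiff_ofLp.comp (contDiff_fst.comp contDiff_snd))
  have hp : ∀ q, ContDiff ℝ k fun a : Jet m n => a.2.2 q := fun q =>
    (contDiff_apply ℝ ℝ q).comp (PiLp.contDiff_ofLp.comp (contDiff_snd.comp contDiff_snd))
  refine PiLp.contDiff_toLp.comp (contDiff_pi.2 fun α => ?_)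
  fun_prop

lemma continuous_jet {φ : (Fin m → ℝ) → Fin n → ℝ} (hφ : ContDiff ℝ 1 φ) :
    Continuous (jet φ) := by
  have hdφ : ∀ p : Fin m × Fin n, Continuous fun x => dphi φ x p.1 p.2 := fun p =>
    (contDiff_pd (k := 0) (by simpa using contDiff_pi.1 hφ p.2) p.1).continuous
  exact continuous_id.prodMk ((PiLp.continuous_toLp 2 _).comp hφ.continuous |>.prodMk
    ((PiLp.continuous_toLp 2 _).comp (continuous_pi hdφ)))

lemma norm_jet_sub_le (φ ψ : (Fin m → ℝ) → Fin n → ℝ) (x : Fin m → ℝ) :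
    ‖jet φ x - jet ψ x‖ ≤ vnorm (fun α => φ x α - ψ x α)
      + vnorm (fun p : Fin m × Fin n => dphi φ x p.1 p.2 - dphi ψ x p.1 p.2) := by
  simp only [vnorm_eq_norm, jet, Prod.mk_sub_mk, sub_self, Prod.norm_mk, norm_zero,
    ← WithLp.toLp_sub]
  exact max_le (by positivity) (max_le_iff.2 ⟨le_add_of_nonneg_right (norm_nonneg _),
    le_add_of_nonneg_left (norm_nonneg _)⟩)

theorem estimate_laplacian_difference_of_maps_general
    {m n : ℕ} (P : ChartData m n)
    (hPdom : P.SmoothDomain) (hPtar : P.SmoothTarget)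
    (φ ψ : (Fin m → ℝ) → Fin n → ℝ)
    (hφ : ContDiff ℝ (⊤ : ℕ∞) φ) (hψ : ContDiff ℝ (⊤ : ℕ∞) ψ)
    (D : Set (Fin m → ℝ)) (hDcpt : IsCompact (closure D)) :
    ∃ C > 0, ∀ x ∈ D,
      vnorm (fun α : Fin n => lap P (fun z => φ z α - ψ z α) x)
        ≤ C * (vnorm (fun α : Fin n => φ x α - ψ x α)
          + vnorm (fun p : Fin m × Fin n => dphi φ x p.1 p.2 - dphi ψ x p.1 p.2)
          + vnorm (fun α : Fin n => uvar P φ 0 x α - uvar P ψ 0 x α)) := by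
  have hQ : ContDiff ℝ 1 (christoffelQuad P) :=
    contDiff_infty.1 (contDiff_christoffelQuad P hPdom.1 hPtar) 1
  obtain ⟨L, hL⟩ := hQ.exists_norm_comp_sub_comp_le hDcpt
    (continuous_jet (contDiff_infty.1 hφ 1)) (continuous_jet (contDiff_infty.1 hψ 1))
  refine ⟨L + 1, by positivity, fun x hx => ?_⟩
  have hlap : (WithLp.toLp 2 fun α => lap P (fun z => φ z α - ψ z α) x : EuclideanSpace ℝ (Fin n))
      = (christoffelQuad P (jet φ x) - christoffelQuad P (jet ψ x))
        - WithLp.toLp 2 fun α => uvar P φ 0 x α - uvar P ψ 0 x α := by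
    ext α
    simp only [WithLp.ofLp_sub, Pi.sub_apply]
    rw [lap_sub P (contDiff_infty.1 (contDiff_pi.1 hφ α) 2)
      (contDiff_infty.1 (contDiff_pi.1 hψ α) 2),
      lap_eq_christoffelQuad_sub_uvar, lap_eq_christoffelQuad_sub_uvar]
    ring
  have hjet := (hL x (subset_closure hx)).trans
    (mul_le_mul_of_nonneg_left (norm_jet_sub_le φ ψ x) L.coe_nonneg)
  calc vnorm (fun α => lap P (fun z => φ z α - ψ z α) x)
      ≤ ‖christoffelQuad P (jet φ x) - christoffelQuad P (jet ψ x)‖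
          + vnorm (fun α => uvar P φ 0 x α - uvar P ψ 0 x α) := by
        rw [vnorm_eq_norm, hlap, vnorm_eq_norm]
        exact norm_sub_le _ _
    _ ≤ (L + 1) * (vnorm (fun α => φ x α - ψ x α)
          + vnorm (fun p : Fin m × Fin n => dphi φ x p.1 p.2 - dphi ψ x p.1 p.2)
          + vnorm (fun α => uvar P φ 0 x α - uvar P ψ 0 x α)) := by
        nlinarith [L.coe_nonneg, vnorm_nonneg fun α => φ x α - ψ x α,
          vnorm_nonneg fun p : Fin m × Fin n => dphi φ x p.1 p.2 - dphi ψ x p.1 p.2,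
          vnorm_nonneg fun α => uvar P φ 0 x α - uvar P ψ 0 x α]

/-- (First lemma in the proof of Theorem 1.2.)
For two smooth maps `φ, φ̃` in the same local charts, on any open set `D` with
compact closure contained in the chart domain `U` there exists `C > 0` with
`|Δ(φ - φ̃)| ≤ C(|φ - φ̃| + |dφ - dφ̃| + |u₀ - ũ₀|)`. -/
theorem estimate_laplacian_difference_of_maps
    {m n : ℕ} (P : ChartData m n)
    (hPdom : P.SmoothDomain) (hPtar : P.SmoothTarget)
    (U : Set (Fin m → ℝ)) (hUopen : IsOpen U)
    (φ ψ : (Fin m → ℝ) → Fin n → ℝ)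
    (hφ : ContDiff ℝ (⊤ : ℕ∞) φ) (hψ : ContDiff ℝ (⊤ : ℕ∞) ψ)
    (D : Set (Fin m → ℝ)) (hDopen : IsOpen D) (hDcpt : IsCompact (closure D))
    (hDsub : closure D ⊆ U) :
    ∃ C > 0, ∀ x ∈ D,
      vnorm (fun α : Fin n => lap P (fun z => φ z α - ψ z α) x)
        ≤ C * (vnorm (fun α : Fin n => φ x α - ψ x α)
          + vnorm (fun p : Fin m × Fin n => dphi φ x p.1 p.2 - dphi ψ x p.1 p.2)
          + vnorm (fun α : Fin n => uvar P φ 0 x α - uvar P ψ 0 x α)) :=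
  estimate_laplacian_difference_of_maps_general P hPdom hPtar φ ψ hφ hψ D hDcpt

end Polyharm
end
end

section
/- Let φ : M → N be a polyharmonic map of even order k = 2s ≥ 4 with local variables u_j, v_j as above, and write the equation τ_k(φ) = 0 in local coordinates as Δu_{k−2}^α = (F^k)^α with (F^k)^α = −A_{k−1}^α − [RHS]^α, where [RHS] is the right-hand side of the Euler–Lagrange equation without its leading term. Then (F^k)^α = −A_{k−1}^α − u_{k−2}^δ ⟨dφ^γ, dφ^β⟩ R^α_{βγδ} + Σ_{ℓ=1}^{k/2−1} ( u^δ_{k/2−ℓ−1} ⟨v^γ_{k/2+ℓ−2}, dφ^β⟩ R^α_{βγδ} + u^ϑ_{k/2+ℓ−2} u^δ_{k/2−ℓ−1} ⟨dφ^η, dφ^β⟩ E^α_{βδϑη} + u^δ_{k/2+ℓ−2} ⟨v^γ_{k/2−ℓ−1}, dφ^β⟩ R^α_{βγδ} ), where E^α_{βδϑη} = R^α_{βγδ} Γ^γ_{ϑη} + R^α_{βγϑ} Γ^γ_{δη}. -/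
noncomputable section

open scoped BigOperators

namespace Polyharm

variable {m n : ℕ}

/-- `E^α_{βδϑη} = R^α_{βγδ}Γ^γ_{ϑη} + R^α_{βγϑ}Γ^γ_{δη}`. -/
def Ecoef (P : ChartData m n) (y : Fin n → ℝ) (α β δ ϑ η : Fin n) : ℝ :=
  ∑ γ, (Rc P y α β γ δ * P.ΓN y γ ϑ η + Rc P y α β γ ϑ * P.ΓN y γ δ η)

/-- `⟨v^γ, dφ^β⟩ = g^{ij} v_i^γ φ_j^β`. -/
def vpair (P : ChartData m n) (φ : (Fin m → ℝ) → Fin n → ℝ) (v : Fin m → Fin n → ℝ)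
    (x : Fin m → ℝ) (γ β : Fin n) : ℝ :=
  ∑ i, ∑ j, P.ginv x i j * v i γ * dphi φ x j β

/-- The explicit local right-hand side `F^k` of the polyharmonic map equation
`Δu_{k-2}^α = (F^k)^α` for even order `k = 2s ≥ 4`:
`(F^k)^α = -A_{k-1}^α - u_{k-2}^δ⟨dφ^γ,dφ^β⟩R^α_{βγδ}
 + Σ_{ℓ=1}^{k/2-1}( u^δ_{k/2-ℓ-1}⟨v^γ_{k/2+ℓ-2},dφ^β⟩R^α_{βγδ}
   + u^ϑ_{k/2+ℓ-2}u^δ_{k/2-ℓ-1}⟨dφ^η,dφ^β⟩E^α_{βδϑη}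
   + u^δ_{k/2+ℓ-2}⟨v^γ_{k/2-ℓ-1},dφ^β⟩R^α_{βγδ} )`. -/
def FkEven (P : ChartData m n) (φ : (Fin m → ℝ) → Fin n → ℝ) (k : ℕ) (x : Fin m → ℝ)
    (α : Fin n) : ℝ :=
  -Asec P φ (uvar P φ (k-2)) x α
    - (∑ δ, ∑ γ, ∑ β, uvar P φ (k-2) x δ * dpair P φ φ x γ β * Rc P (φ x) α β γ δ)
    + ∑ ℓ ∈ Finset.Icc 1 (k/2 - 1),
        ((∑ δ, ∑ γ, ∑ β, uvar P φ (k/2 - ℓ - 1) x δ *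
            vpair P φ (vvar P φ (k/2 + ℓ - 2) x) x γ β * Rc P (φ x) α β γ δ)
          + (∑ ϑ, ∑ δ, ∑ η, ∑ β, uvar P φ (k/2 + ℓ - 2) x ϑ * uvar P φ (k/2 - ℓ - 1) x δ *
              dpair P φ φ x η β * Ecoef P (φ x) α β δ ϑ η)
          + ∑ δ, ∑ γ, ∑ β, uvar P φ (k/2 + ℓ - 2) x δ *
              vpair P φ (vvar P φ (k/2 - ℓ - 1) x) x γ β * Rc P (φ x) α β γ δ)


section Aux
variable {m n : ℕ}

lemma Rc_swap (P : ChartData m n) (y : Fin n → ℝ) (α δ β γ : Fin n) :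
    Rc P y α δ γ β = -Rc P y α δ β γ := by
  simp only [Rc, Finset.sum_sub_distrib]; ring

lemma flat5a (f : Fin m → Fin m → Fin n → Fin n → Fin n → ℝ) :
    ∑ i, ∑ j, ∑ β, ∑ γ, ∑ δ, f i j β γ δ
      = ∑ p : Fin m × Fin m × Fin n × Fin n × Fin n,
          f p.1 p.2.1 p.2.2.1 p.2.2.2.1 p.2.2.2.2 := by
  simp [Fintype.sum_prod_type]

lemma flat5b (f : Fin n → Fin n → Fin n → Fin m → Fin m → ℝ) :
    ∑ a, ∑ b, ∑ c, ∑ i, ∑ j, f a b c i j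
      = ∑ p : Fin n × Fin n × Fin n × Fin m × Fin m,
          f p.1 p.2.1 p.2.2.1 p.2.2.2.1 p.2.2.2.2 := by
  simp [Fintype.sum_prod_type]

def perm5 : (Fin m × Fin m × Fin n × Fin n × Fin n) ≃ (Fin n × Fin n × Fin n × Fin m × Fin m) where
  toFun p := (p.2.2.1, p.2.2.2.1, p.2.2.2.2, p.1, p.2.1)
  invFun q := (q.2.2.2.1, q.2.2.2.2, q.1, q.2.1, q.2.2.1)
  left_inv := by rintro ⟨_,_,_,_,_⟩; rfl
  right_inv := by rintro ⟨_,_,_,_,_⟩; rfl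

lemma trRphi_eq (P : ChartData m n) (φ X : (Fin m → ℝ) → Fin n → ℝ) (x : Fin m → ℝ) (α : Fin n) :
    trRphi P φ X x α
      = -∑ δ, ∑ γ, ∑ β, X x δ * dpair P φ φ x γ β * Rc P (φ x) α β γ δ := by
  simp only [trRphi, dpair, Finset.mul_sum, Finset.sum_mul, ← Finset.sum_neg_distrib]
  rw [flat5a (fun i j β γ δ => P.ginv x i j * Rc P (φ x) α δ β γ * X x β * dphi φ x i γ * dphi φ x j δ),
      flat5b (fun a b c i j => -(X x a * (P.ginv x i j * dphi φ x i b * dphi φ x j c) * Rc P (φ x) α c b a))]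
  refine Fintype.sum_equiv perm5 _ _ ?_
  rintro ⟨i,j,β,γ,δ⟩
  simp only [perm5, Equiv.coe_fn_mk]
  rw [Rc_swap]
  ring

lemma flat7a (f : Fin m → Fin m → Fin n → Fin n → Fin n → Fin n → Fin n → ℝ) :
    ∑ i, ∑ j, ∑ β, ∑ γ, ∑ δ, ∑ ρ, ∑ σ, f i j β γ δ ρ σ
      = ∑ p : Fin m × Fin m × Fin n × Fin n × Fin n × Fin n × Fin n,
          f p.1 p.2.1 p.2.2.1 p.2.2.2.1 p.2.2.2.2.1 p.2.2.2.2.2.1 p.2.2.2.2.2.2 := by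
  simp [Fintype.sum_prod_type]

lemma flat7b (f : Fin n → Fin n → Fin n → Fin n → Fin n → Fin m → Fin m → ℝ) :
    ∑ a, ∑ b, ∑ c, ∑ d, ∑ e, ∑ i, ∑ j, f a b c d e i j
      = ∑ p : Fin n × Fin n × Fin n × Fin n × Fin n × Fin m × Fin m,
          f p.1 p.2.1 p.2.2.1 p.2.2.2.1 p.2.2.2.2.1 p.2.2.2.2.2.1 p.2.2.2.2.2.2 := by
  simp [Fintype.sum_prod_type]

def perm5c : (Fin m × Fin m × Fin n × Fin n × Fin n) ≃ (Fin n × Fin n × Fin n × Fin m × Fin m) where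
  toFun p := (p.2.2.2.1, p.2.2.1, p.2.2.2.2, p.1, p.2.1)
  invFun q := (q.2.2.2.1, q.2.2.2.2, q.2.1, q.1, q.2.2.1)
  left_inv := by rintro ⟨_,_,_,_,_⟩; rfl
  right_inv := by rintro ⟨_,_,_,_,_⟩; rfl

def perm7a : (Fin m × Fin m × Fin n × Fin n × Fin n × Fin n × Fin n)
    ≃ (Fin n × Fin n × Fin n × Fin n × Fin n × Fin m × Fin m) where
  toFun p := (p.2.2.2.2.2.2, p.2.2.2.1, p.2.2.2.2.2.1, p.2.2.2.2.1, p.2.2.1, p.1, p.2.1)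
  invFun q := (q.2.2.2.2.2.1, q.2.2.2.2.2.2, q.2.2.2.2.1, q.2.1, q.2.2.2.1, q.2.2.1, q.1)
  left_inv := by rintro ⟨_,_,_,_,_,_,_⟩; rfl
  right_inv := by rintro ⟨_,_,_,_,_,_,_⟩; rfl

def perm7b : (Fin m × Fin m × Fin n × Fin n × Fin n × Fin n × Fin n)
    ≃ (Fin n × Fin n × Fin n × Fin n × Fin n × Fin m × Fin m) where
  toFun p := (p.2.2.1, p.2.2.2.2.2.2, p.2.2.2.2.2.1, p.2.2.2.2.1, p.2.2.2.1, p.1, p.2.1)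
  invFun q := (q.2.2.2.2.2.1, q.2.2.2.2.2.2, q.1, q.2.2.2.2.1, q.2.2.2.1, q.2.2.1, q.2.1)
  left_inv := by rintro ⟨_,_,_,_,_,_,_⟩; rfl
  right_inv := by rintro ⟨_,_,_,_,_,_,_⟩; rfl

lemma trRD_sub_eq (P : ChartData m n) (hG : ∀ y a b c, P.ΓN y a b c = P.ΓN y a c b)
    (φ W Z : (Fin m → ℝ) → Fin n → ℝ) (x : Fin m → ℝ) (α : Fin n) :
    trRD P φ W Z x α - trRD2 P φ W Z x α
      = (∑ δ, ∑ γ, ∑ β, Z x δ * vpair P φ (fun i γ' => pd i (fun z => W z γ') x) x γ β * Rc P (φ x) α β γ δ)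
        + (∑ ϑ, ∑ δ, ∑ η, ∑ β, W x ϑ * Z x δ * dpair P φ φ x η β * Ecoef P (φ x) α β δ ϑ η)
        + (∑ δ, ∑ γ, ∑ β, W x δ * vpair P φ (fun i γ' => pd i (fun z => Z z γ') x) x γ β * Rc P (φ x) α β γ δ) := by
  simp only [trRD, trRD2, covD, vpair, dpair, Ecoef, mul_add, add_mul, Finset.mul_sum,
    Finset.sum_mul, Finset.sum_add_distrib]
  have h1 : (∑ i : Fin m, ∑ j : Fin m, ∑ β : Fin n, ∑ γ : Fin n, ∑ δ : Fin n,
        P.ginv x i j * Rc P (φ x) α δ β γ * pd i (fun z => W z β) x * Z x γ * dphi φ x j δ)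
      = ∑ a : Fin n, ∑ b : Fin n, ∑ c : Fin n, ∑ i : Fin m, ∑ j : Fin m,
          Z x a * (P.ginv x i j * pd i (fun z => W z b) x * dphi φ x j c) * Rc P (φ x) α c b a := by
    rw [flat5a (fun i j β γ δ => P.ginv x i j * Rc P (φ x) α δ β γ * pd i (fun z => W z β) x * Z x γ * dphi φ x j δ),
        flat5b (fun a b c i j => Z x a * (P.ginv x i j * pd i (fun z => W z b) x * dphi φ x j c) * Rc P (φ x) α c b a)]
    refine Fintype.sum_equiv perm5c _ _ ?_
    rintro ⟨i,j,β,γ,δ⟩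
    simp only [perm5c, Equiv.coe_fn_mk]
    ring
  have h3 : (∑ i : Fin m, ∑ j : Fin m, ∑ β : Fin n, ∑ γ : Fin n, ∑ δ : Fin n,
        P.ginv x i j * Rc P (φ x) α δ β γ * W x β * pd i (fun z => Z z γ) x * dphi φ x j δ)
      = -∑ a : Fin n, ∑ b : Fin n, ∑ c : Fin n, ∑ i : Fin m, ∑ j : Fin m,
          W x a * (P.ginv x i j * pd i (fun z => Z z b) x * dphi φ x j c) * Rc P (φ x) α c b a := by
    rw [flat5a (fun i j β γ δ => P.ginv x i j * Rc P (φ x) α δ β γ * W x β * pd i (fun z => Z z γ) x * dphi φ x j δ),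
        flat5b (fun a b c i j => W x a * (P.ginv x i j * pd i (fun z => Z z b) x * dphi φ x j c) * Rc P (φ x) α c b a),
        ← Finset.sum_neg_distrib]
    refine Fintype.sum_equiv perm5 _ _ ?_
    rintro ⟨i,j,β,γ,δ⟩
    simp only [perm5, Equiv.coe_fn_mk]
    rw [Rc_swap P (φ x) α δ γ β]
    ring
  have h2 : (∑ i : Fin m, ∑ j : Fin m, ∑ β : Fin n, ∑ γ : Fin n, ∑ δ : Fin n, ∑ ρ : Fin n, ∑ σ : Fin n,
        P.ginv x i j * Rc P (φ x) α δ β γ * (P.ΓN (φ x) β ρ σ * dphi φ x i ρ * W x σ) * Z x γ * dphi φ x j δ)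
      = ∑ a : Fin n, ∑ b : Fin n, ∑ c : Fin n, ∑ d : Fin n, ∑ e : Fin n, ∑ i : Fin m, ∑ j : Fin m,
          W x a * Z x b * (P.ginv x i j * dphi φ x i c * dphi φ x j d) *
            (Rc P (φ x) α d e b * P.ΓN (φ x) e a c) := by
    rw [flat7a (fun i j β γ δ ρ σ => P.ginv x i j * Rc P (φ x) α δ β γ * (P.ΓN (φ x) β ρ σ * dphi φ x i ρ * W x σ) * Z x γ * dphi φ x j δ),
        flat7b (fun a b c d e i j => W x a * Z x b * (P.ginv x i j * dphi φ x i c * dphi φ x j d) * (Rc P (φ x) α d e b * P.ΓN (φ x) e a c))]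
    refine Fintype.sum_equiv perm7a _ _ ?_
    rintro ⟨i,j,β,γ,δ,ρ,σ⟩
    simp only [perm7a, Equiv.coe_fn_mk]
    rw [hG (φ x) β ρ σ]
    ring
  have h4 : (∑ i : Fin m, ∑ j : Fin m, ∑ β : Fin n, ∑ γ : Fin n, ∑ δ : Fin n, ∑ ρ : Fin n, ∑ σ : Fin n,
        P.ginv x i j * Rc P (φ x) α δ β γ * W x β * (P.ΓN (φ x) γ ρ σ * dphi φ x i ρ * Z x σ) * dphi φ x j δ)
      = -∑ a : Fin n, ∑ b : Fin n, ∑ c : Fin n, ∑ d : Fin n, ∑ e : Fin n, ∑ i : Fin m, ∑ j : Fin m,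
          W x a * Z x b * (P.ginv x i j * dphi φ x i c * dphi φ x j d) *
            (Rc P (φ x) α d e a * P.ΓN (φ x) e b c) := by
    rw [flat7a (fun i j β γ δ ρ σ => P.ginv x i j * Rc P (φ x) α δ β γ * W x β * (P.ΓN (φ x) γ ρ σ * dphi φ x i ρ * Z x σ) * dphi φ x j δ),
        flat7b (fun a b c d e i j => W x a * Z x b * (P.ginv x i j * dphi φ x i c * dphi φ x j d) * (Rc P (φ x) α d e a * P.ΓN (φ x) e b c)),
        ← Finset.sum_neg_distrib]
    refine Fintype.sum_equiv perm7b _ _ ?_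
    rintro ⟨i,j,β,γ,δ,ρ,σ⟩
    simp only [perm7b, Equiv.coe_fn_mk]
    rw [hG (φ x) γ ρ σ, Rc_swap P (φ x) α δ γ β]
    ring
  rw [h1, h2, h3, h4]
  ring

end Aux

/-- (Lemma 2.6 of the paper.)
Let `φ : M → N` be a polyharmonic map of even order `k = 2s ≥ 4`. Writing the
equation `τ_k(φ) = 0` in local coordinates as `Δu_{k-2}^α = (F^k)^α`, the right-hand
side is given explicitly by
`(F^k)^α = -A_{k-1}^α - u_{k-2}^δ⟨dφ^γ,dφ^β⟩R^α_{βγδ}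
 + Σ_{ℓ=1}^{k/2-1}( u^δ_{k/2-ℓ-1}⟨v^γ_{k/2+ℓ-2},dφ^β⟩R^α_{βγδ}
   + u^ϑ_{k/2+ℓ-2}u^δ_{k/2-ℓ-1}⟨dφ^η,dφ^β⟩E^α_{βδϑη}
   + u^δ_{k/2+ℓ-2}⟨v^γ_{k/2-ℓ-1},dφ^β⟩R^α_{βγδ} )`,
with `E^α_{βδϑη} = R^α_{βγδ}Γ^γ_{ϑη} + R^α_{βγϑ}Γ^γ_{δη}`. -/
theorem polyharmonic_even_local_form
    {m n : ℕ} (P : ChartData m n)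
    (hPdom : P.SmoothDomain) (hPtar : P.SmoothTarget) (hPriem : P.Riemannian)
    (φ : (Fin m → ℝ) → Fin n → ℝ) (hφ : ContDiff ℝ (⊤ : ℕ∞) φ)
    (k : ℕ) (hk : 4 ≤ k) (hkeven : Even k)
    (hpoly : ∀ (x : Fin m → ℝ) (α : Fin n), tauK P φ k x α = 0) :
    ∀ (x : Fin m → ℝ) (α : Fin n),
      lap P (fun z => uvar P φ (k-2) z α) x = FkEven P φ k x α := by
  intro x α
  have hG : ∀ y a b c, P.ΓN y a b c = P.ΓN y a c b := hPriem.2.2.2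
  have h := hpoly x α
  simp only [tauK] at h
  rw [if_pos hkeven] at h
  have e1 : k - 1 = (k-2) + 1 := by omega
  rw [e1] at h
  have e2 : uvar P φ ((k-2)+1) x α
      = lap P (fun z => uvar P φ (k-2) z α) x + Asec P φ (uvar P φ (k-2)) x α := rfl
  rw [e2, trRphi_eq P φ (uvar P φ (k-2)) x α] at h
  have hsum := Finset.sum_congr rfl
    (fun ℓ (_ : ℓ ∈ Finset.Icc 1 (k/2-1)) =>
      trRD_sub_eq P hG φ (uvar P φ (k/2+ℓ-2)) (uvar P φ (k/2-ℓ-1)) x α)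
  simp only [FkEven,
    show ∀ j, vvar P φ j x = fun i γ' => pd i (fun z => uvar P φ j z γ') x from fun j => rfl]
  linarith [h, hsum]

end Polyharm
end
end
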